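/- Eliminating one column preserves the triangular structure: let T be an N-by-N matrix over a commutative ring whose columns j through N are in upper triangular form (T_{i,k} = 0 for i > k, k ≥ j), and suppose additionally T_{i,j-1} = 0 for i > j (Hessenberg condition in column j-1). Let G be the identity except G_{j-1,j-1} = T_{j,j}, G_{j,j-1} = -T_{j,j-1}. Then T' = T·G has columns j-1 through N in upper triangular form, and T'_{i,i} = T_{i,i} for all i ≥ j. -/
import Mathlib


/-- One elimination step preserves the triangular structure: if columns b..N of T are
upper triangular (b = j, a = j-1), T is Hessenberg in column a, and G is the identity
except G_{a,a} = T_{b,b}, G_{b,a} = -T_{b,a}, then T' = T·G has columns a..N upper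
triangular and unchanged diagonal entries T'_{i,i} = T_{i,i} for i ≥ b. -/
theorem stmt_10 {R : Type*} [CommRing R] {N : ℕ} (T : Matrix (Fin N) (Fin N) R)
    (a b : Fin N) (hab : (b : ℕ) = (a : ℕ) + 1)
    (htri : ∀ i k : Fin N, b ≤ k → k < i → T i k = 0)
    (hhess : ∀ i : Fin N, b < i → T i a = 0)
    (G : Matrix (Fin N) (Fin N) R)
    (hG : G = Matrix.of fun i k =>
      if k = a then (if i = a then T b b else if i = b then -(T b a) else 0)
      else if i = k then 1 else 0) :
    (∀ i k : Fin N, a ≤ k → k < i → (T * G) i k = 0) ∧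
      (∀ i : Fin N, b ≤ i → (T * G) i i = T i i) := by
  have hne : a ≠ b := by
    intro h; rw [h] at hab; omega
  have hlt : a < b := by
    rw [Fin.lt_def]; omega
  -- entry formula, column a
  have hcolA : ∀ i : Fin N, (T * G) i a = T i a * T b b + T i b * -(T b a) := by
    intro i
    rw [Matrix.mul_apply]
    have : ∀ l : Fin N, T i l * G l a =
        (if l = a then T i a * T b b else 0) + (if l = b then T i b * -(T b a) else 0) := by
      intro l
      subst hG
      simp only [Matrix.of_apply, if_pos rfl]
      by_cases h1 : l = a
      · subst h1; simp [hne]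
      · by_cases h2 : l = b
        · subst h2; simp [Ne.symm hne]
        · simp [h1, h2]
    rw [Finset.sum_congr rfl fun l _ => this l, Finset.sum_add_distrib]
    simp
  -- entry formula, other columns
  have hcol : ∀ i k : Fin N, k ≠ a → (T * G) i k = T i k := by
    intro i k hk
    rw [Matrix.mul_apply]
    have : ∀ l : Fin N, T i l * G l k = if l = k then T i k else 0 := by
      intro l
      subst hG
      simp only [Matrix.of_apply, if_neg hk]
      by_cases h : l = k
      · subst h; simp
      · simp [h]
    rw [Finset.sum_congr rfl fun l _ => this l]
    simp
  constructor
  · intro i k hak hki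
    by_cases hk : k = a
    · subst hk
      rw [hcolA]
      rcases lt_trichotomy b i with h | h | h
      · rw [hhess i h, htri i b le_rfl h]; ring
      · subst h; ring
      · exfalso
        rw [Fin.lt_def] at hki h
        omega
    · rw [hcol i k hk]
      have hbk : b ≤ k := by
        rw [Fin.le_def]
        rw [Fin.le_def] at hak
        have : (a : ℕ) ≠ (k : ℕ) := fun h => hk (Fin.ext h.symm)
        omega
      exact htri i k hbk hki
  · intro i hbi
    have : i ≠ a := by
      intro h; subst h
      exact absurd hbi (not_le_of_gt hlt)
    rw [hcol i i this]
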